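/- Fix innate opinions s ∈ ℝⁿ and distinct vertices i, j. For M a Laplacian matrix write z_M = (I+M)^{-1}·s. Then the one-sided derivative of polarization in the direction of edge weight w_ij exists and is given by lim_{t→0⁺} (P(z_{L + t·L_ij}) − P(z_L))/t = −2·s̃ᵀ(I+L)^{-2}·L_ij·(I+L)^{-1}·s̃ = −2·z̃ᵀ(I+L)^{-1}·L_ij·z̃, where z = z_L. -/

import Mathlib

open Matrix Finset

noncomputable def deg {n : ℕ} (W : Matrix (Fin n) (Fin n) ℝ) (i : Fin n) : ℝ := ∑ j, W i j

noncomputable def lap {n : ℕ} (W : Matrix (Fin n) (Fin n) ℝ) : Matrix (Fin n) (Fin n) ℝ :=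
  Matrix.diagonal (deg W) - W

noncomputable def mean {n : ℕ} (x : Fin n → ℝ) : ℝ := (∑ i, x i) / n

noncomputable def ctr {n : ℕ} (x : Fin n → ℝ) : Fin n → ℝ := fun i => x i - mean x

noncomputable def pol {n : ℕ} (x : Fin n → ℝ) : ℝ := ∑ i, (x i - mean x) ^ 2

def vij {n : ℕ} (i j : Fin n) : Fin n → ℝ :=
  fun k => (if k = i then (1 : ℝ) else 0) - (if k = j then (1 : ℝ) else 0)

open Filter Topology

/-!
Write `A = I + L` and `E = L_ij`. The resolvent identity
`(A + tE)⁻¹ = A⁻¹ - t (A + tE)⁻¹ E A⁻¹` gives `z_t = z - t (A + tE)⁻¹ E z` exactly, so, `P` being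
a quadratic form, the difference quotient equals `-2 z̃ᵀ (A + tE)⁻¹ E z + t P((A + tE)⁻¹ E z)`,
which is continuous in `t`. The two forms of the limit agree because `A⁻¹` is symmetric and fixes
the constant vectors, hence commutes with centring (`A⁻¹ s̃ = z̃`), and `E` kills constants
(`E z = E z̃`).
-/

section Centering

variable {n : ℕ}

lemma mean_add (x y : Fin n → ℝ) : mean (x + y) = mean x + mean y := by
  simp [mean, sum_add_distrib, add_div]

lemma mean_smul (c : ℝ) (x : Fin n → ℝ) : mean (c • x) = c * mean x := by
  simp only [mean, Pi.smul_apply, smul_eq_mul, ← mul_sum, mul_div_assoc]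

lemma ctr_eq_sub (x : Fin n → ℝ) : ctr x = x - mean x • 1 := by
  ext i
  simp [ctr]

lemma ctr_add (x y : Fin n → ℝ) : ctr (x + y) = ctr x + ctr y := by
  simp only [ctr_eq_sub, mean_add, add_smul]
  abel

lemma ctr_smul (c : ℝ) (x : Fin n → ℝ) : ctr (c • x) = c • ctr x := by
  simp only [ctr_eq_sub, mean_smul, smul_sub, mul_smul]

lemma ctr_dotProduct_one (x : Fin n → ℝ) : ctr x ⬝ᵥ 1 = 0 := by
  rcases n.eq_zero_or_pos with rfl | hn
  · simp
  · simp [dotProduct_one, ctr, sum_sub_distrib, mean]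
    field_simp
    ring

lemma dotProduct_ctr {v : Fin n → ℝ} (hv : v ⬝ᵥ 1 = 0) (x : Fin n → ℝ) :
    v ⬝ᵥ ctr x = v ⬝ᵥ x := by
  rw [ctr_eq_sub, dotProduct_sub, dotProduct_smul, hv, smul_zero, sub_zero]

lemma pol_eq_dotProduct (x : Fin n → ℝ) : pol x = ctr x ⬝ᵥ ctr x := by
  simp [pol, ctr, dotProduct, sq]

lemma pol_add (x y : Fin n → ℝ) : pol (x + y) = pol x + 2 * (ctr x ⬝ᵥ y) + pol y := by
  rw [pol_eq_dotProduct, pol_eq_dotProduct, pol_eq_dotProduct, ctr_add,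
    ← dotProduct_ctr (ctr_dotProduct_one x) y]
  simp only [dotProduct_add, add_dotProduct, dotProduct_comm (ctr y) (ctr x)]
  ring

lemma pol_smul (c : ℝ) (x : Fin n → ℝ) : pol (c • x) = c ^ 2 * pol x := by
  simp only [pol_eq_dotProduct, ctr_smul, dotProduct_smul, smul_dotProduct, smul_eq_mul]
  ring

lemma continuous_pol : Continuous (pol : (Fin n → ℝ) → ℝ) := by
  unfold pol mean
  fun_prop

lemma mean_mulVec {M : Matrix (Fin n) (Fin n) ℝ} (hM : 1 ᵥ* M = 1) (x : Fin n → ℝ) :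
    mean (M *ᵥ x) = mean x := by
  rw [mean, mean, ← one_dotProduct, ← one_dotProduct, dotProduct_mulVec, hM]

lemma ctr_mulVec {M : Matrix (Fin n) (Fin n) ℝ} (hrow : M *ᵥ 1 = 1) (hcol : 1 ᵥ* M = 1)
    (x : Fin n → ℝ) : ctr (M *ᵥ x) = M *ᵥ ctr x := by
  rw [ctr_eq_sub, ctr_eq_sub, mean_mulVec hcol, mulVec_sub, mulVec_smul, hrow]

end Centering

section Laplacian

variable {n : ℕ} (W : Matrix (Fin n) (Fin n) ℝ)

lemma lap_mulVec_apply (x : Fin n → ℝ) (i : Fin n) :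
    (lap W *ᵥ x) i = ∑ j, W i j * (x i - x j) := by
  rw [lap, sub_mulVec, Pi.sub_apply, mulVec_diagonal]
  simp only [deg, mulVec, dotProduct, sum_mul, mul_sub, sum_sub_distrib]

lemma lap_mulVec_one : lap W *ᵥ 1 = 0 := by
  ext i
  simp [lap_mulVec_apply]

lemma isSymm_lap (hW : W.IsSymm) : (lap W).IsSymm :=
  (isSymm_diagonal _).sub hW

lemma two_mul_dotProduct_lap_mulVec (hW : W.IsSymm) (x : Fin n → ℝ) :
    2 * (x ⬝ᵥ (lap W *ᵥ x)) = ∑ i, ∑ j, W i j * (x i - x j) ^ 2 := by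
  have hswap : ∑ i, ∑ j, W i j * (x i * (x i - x j)) =
      ∑ i, ∑ j, W i j * (x j * (x j - x i)) := by
    rw [sum_comm]
    simp only [hW.apply]
  calc 2 * (x ⬝ᵥ (lap W *ᵥ x))
      = ∑ i, ∑ j, W i j * (x i * (x i - x j)) + ∑ i, ∑ j, W i j * (x j * (x j - x i)) := by
        rw [← hswap, two_mul]
        simp only [dotProduct, lap_mulVec_apply, mul_sum]
        simp only [mul_left_comm]
    _ = ∑ i, ∑ j, W i j * (x i - x j) ^ 2 := by
        rw [← sum_add_distrib]
        refine sum_congr rfl fun i _ => ?_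
        rw [← sum_add_distrib]
        exact sum_congr rfl fun j _ => by ring

lemma posSemidef_lap (hW : W.IsSymm) (hW0 : ∀ i j, 0 ≤ W i j) : (lap W).PosSemidef := by
  refine .of_dotProduct_mulVec_nonneg (isSymm_lap W hW) fun x => ?_
  have h := two_mul_dotProduct_lap_mulVec W hW x
  have : 0 ≤ ∑ i, ∑ j, W i j * (x i - x j) ^ 2 :=
    sum_nonneg fun i _ => sum_nonneg fun j _ => mul_nonneg (hW0 i j) (sq_nonneg _)
  rw [star_trivial]
  linarith

lemma one_add_lap_mulVec_one : (1 + lap W) *ᵥ 1 = 1 := by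
  rw [add_mulVec, one_mulVec, lap_mulVec_one, add_zero]

lemma isUnit_one_add_lap (hW : W.IsSymm) (hW0 : ∀ i j, 0 ≤ W i j) : IsUnit (1 + lap W) :=
  (PosDef.one.add_posSemidef (posSemidef_lap W hW hW0)).isUnit

lemma vij_dotProduct_one (i j : Fin n) : vij i j ⬝ᵥ 1 = 0 := by
  simp [vij, dotProduct_one, sum_sub_distrib]

end Laplacian

section Resolvent

variable {m : Type*} [Fintype m] [DecidableEq m]

lemma inv_mulVec_eq_of_mulVec_eq {α : Type*} [CommRing α] {A : Matrix m m α} (hA : IsUnit A)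
    {x : m → α} (h : A *ᵥ x = x) : A⁻¹ *ᵥ x = x := by
  conv_lhs => rw [← h]
  rw [mulVec_mulVec, nonsing_inv_mul _ ((isUnit_iff_isUnit_det A).1 hA), one_mulVec]

lemma inv_add_smul_mulVec {α : Type*} [CommRing α] {A E : Matrix m m α} {t : α}
    (hA : IsUnit A) (hAt : IsUnit (A + t • E)) (s : m → α) :
    (A + t • E)⁻¹ *ᵥ s = A⁻¹ *ᵥ s - t • ((A + t • E)⁻¹ *ᵥ (E *ᵥ (A⁻¹ *ᵥ s))) := by
  have h := Matrix.inv_sub_inv (iff_of_true hAt hA)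
  rw [sub_eq_iff_eq_add, sub_add_cancel_left] at h
  conv_lhs => rw [h]
  rw [add_mulVec, ← mulVec_mulVec, ← mulVec_mulVec, neg_mulVec, smul_mulVec, mulVec_neg,
    mulVec_smul]
  abel

lemma eventually_isUnit_add_smul {A : Matrix m m ℝ} (hA : IsUnit A) (E : Matrix m m ℝ) :
    ∀ᶠ t in 𝓝 (0 : ℝ), IsUnit (A + t • E) := by
  have hdet : Continuous fun t : ℝ => (A + t • E).det := by fun_prop
  simp_rw [isUnit_iff_isUnit_det, isUnit_iff_ne_zero] at hA ⊢
  exact hdet.continuousAt.eventually_ne (by simpa using hA)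

lemma continuousAt_inv_add_smul {A : Matrix m m ℝ} (hA : IsUnit A) (E : Matrix m m ℝ) :
    ContinuousAt (fun t : ℝ => (A + t • E)⁻¹) 0 := by
  have hinv : ContinuousAt Inv.inv A := continuousAt_matrix_inv A
    (NormedRing.inverse_continuousAt ((isUnit_iff_isUnit_det A).1 hA).unit)
  exact hinv.comp_of_eq (by fun_prop) (by simp)

end Resolvent

lemma tendsto_slope_pol_inv_add_smul_mulVec {n : ℕ} {A : Matrix (Fin n) (Fin n) ℝ}
    (hA : IsUnit A) (E : Matrix (Fin n) (Fin n) ℝ) (s : Fin n → ℝ) :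
    Tendsto (fun t => (pol ((A + t • E)⁻¹ *ᵥ s) - pol (A⁻¹ *ᵥ s)) / t) (𝓝[≠] 0)
      (𝓝 (-2 * (ctr (A⁻¹ *ᵥ s) ⬝ᵥ (A⁻¹ *ᵥ (E *ᵥ (A⁻¹ *ᵥ s)))))) := by
  set z := A⁻¹ *ᵥ s
  set r : ℝ → Fin n → ℝ := fun t => (A + t • E)⁻¹ *ᵥ (E *ᵥ z)
  have hr : ContinuousAt r 0 :=
    (continuous_id.matrix_mulVec continuous_const).continuousAt.comp
      (continuousAt_inv_add_smul hA E)
  have hlim : Tendsto (fun t => -2 * (ctr z ⬝ᵥ r t) + t * pol (r t)) (𝓝[≠] 0)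
      (𝓝 (-2 * (ctr z ⬝ᵥ (A⁻¹ *ᵥ (E *ᵥ z))))) := by
    have hcont : ContinuousAt (fun t => -2 * (ctr z ⬝ᵥ r t) + t * pol (r t)) 0 :=
      (continuousAt_const.mul
          ((continuous_const.dotProduct continuous_id).continuousAt.comp hr)).add
        (continuousAt_id.mul (continuous_pol.continuousAt.comp hr))
    simpa [r] using hcont.tendsto.mono_left nhdsWithin_le_nhds
  refine hlim.congr' ?_
  filter_upwards [self_mem_nhdsWithin,
    (eventually_isUnit_add_smul hA E).filter_mono nhdsWithin_le_nhds] with t (ht : t ≠ 0) hAt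
  have hzt : (A + t • E)⁻¹ *ᵥ s = z + (-t) • r t := by
    rw [inv_add_smul_mulVec hA hAt, neg_smul, ← sub_eq_add_neg]
  rw [hzt, pol_add, pol_smul, dotProduct_smul, smul_eq_mul]
  field_simp
  ring

theorem stmt_3_general {n : ℕ} (wbar : ℝ)
    (W : Matrix (Fin n) (Fin n) ℝ)
    (hsymm : W.IsSymm)
    (hW : ∀ i j, 0 ≤ W i j ∧ W i j ≤ wbar)
    (s : Fin n → ℝ) (i j : Fin n)
    (z : Fin n → ℝ) (hz : z = (1 + lap W)⁻¹ *ᵥ s) :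
    Filter.Tendsto
        (fun t : ℝ =>
          (pol ((1 + (lap W + t • vecMulVec (vij i j) (vij i j)))⁻¹ *ᵥ s) -
              pol ((1 + lap W)⁻¹ *ᵥ s)) / t)
        (nhdsWithin 0 (Set.Ioi 0))
        (nhds (-2 * (ctr s ⬝ᵥ (((1 + lap W)⁻¹ * (1 + lap W)⁻¹) *ᵥ
          (vecMulVec (vij i j) (vij i j) *ᵥ ((1 + lap W)⁻¹ *ᵥ ctr s)))))) ∧
      -2 * (ctr s ⬝ᵥ (((1 + lap W)⁻¹ * (1 + lap W)⁻¹) *ᵥ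
          (vecMulVec (vij i j) (vij i j) *ᵥ ((1 + lap W)⁻¹ *ᵥ ctr s)))) =
        -2 * (ctr z ⬝ᵥ ((1 + lap W)⁻¹ *ᵥ
          (vecMulVec (vij i j) (vij i j) *ᵥ ctr z))) := by
  set E := vecMulVec (vij i j) (vij i j)
  have hA : IsUnit (1 + lap W) := isUnit_one_add_lap W hsymm fun a b => (hW a b).1
  set A := 1 + lap W
  have hsymm_inv : A⁻¹.IsSymm := (isSymm_one.add (isSymm_lap W hsymm)).inv
  have hrow : A⁻¹ *ᵥ 1 = 1 := inv_mulVec_eq_of_mulVec_eq hA (one_add_lap_mulVec_one W)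
  have hcol : 1 ᵥ* A⁻¹ = 1 := by rw [← mulVec_transpose, hsymm_inv.eq, hrow]
  have hctr : A⁻¹ *ᵥ ctr s = ctr z := by rw [hz, ctr_mulVec hrow hcol]
  have hedge : E *ᵥ ctr z = E *ᵥ z := by
    rw [vecMulVec_mulVec, vecMulVec_mulVec, dotProduct_ctr (vij_dotProduct_one i j)]
  have hquad :
      ctr s ⬝ᵥ ((A⁻¹ * A⁻¹) *ᵥ (E *ᵥ (A⁻¹ *ᵥ ctr s))) = ctr z ⬝ᵥ (A⁻¹ *ᵥ (E *ᵥ ctr z)) := by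
    rw [hctr, ← mulVec_mulVec, dotProduct_mulVec, ← mulVec_transpose, hsymm_inv.eq, hctr]
  refine ⟨?_, by rw [hquad]⟩
  simp_rw [← add_assoc, hquad, hedge, hz]
  exact (tendsto_slope_pol_inv_add_smul_mulVec hA E s).mono_left
    (nhdsWithin_mono _ fun t ht => ne_of_gt ht)

/-- Proposition 2: the one-sided derivative of polarization in the
direction of the edge weight `w_ij` exists and equals
`-2 s̃ᵀ(I+L)⁻² L_ij (I+L)⁻¹ s̃ = -2 z̃ᵀ(I+L)⁻¹ L_ij z̃`. -/
theorem stmt_3 {n : ℕ} (hn : 2 ≤ n) (wbar : ℝ) (hwbar : 0 < wbar)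
    (W : Matrix (Fin n) (Fin n) ℝ)
    (hsymm : W.IsSymm) (hdiag : ∀ i, W i i = 0)
    (hW : ∀ i j, 0 ≤ W i j ∧ W i j ≤ wbar)
    (s : Fin n → ℝ) (i j : Fin n) (hij : i ≠ j)
    (z : Fin n → ℝ) (hz : z = (1 + lap W)⁻¹ *ᵥ s) :
    Filter.Tendsto
        (fun t : ℝ =>
          (pol ((1 + (lap W + t • vecMulVec (vij i j) (vij i j)))⁻¹ *ᵥ s) -
              pol ((1 + lap W)⁻¹ *ᵥ s)) / t)
        (nhdsWithin 0 (Set.Ioi 0))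
        (nhds (-2 * (ctr s ⬝ᵥ (((1 + lap W)⁻¹ * (1 + lap W)⁻¹) *ᵥ
          (vecMulVec (vij i j) (vij i j) *ᵥ ((1 + lap W)⁻¹ *ᵥ ctr s)))))) ∧
      -2 * (ctr s ⬝ᵥ (((1 + lap W)⁻¹ * (1 + lap W)⁻¹) *ᵥ
          (vecMulVec (vij i j) (vij i j) *ᵥ ((1 + lap W)⁻¹ *ᵥ ctr s)))) =
        -2 * (ctr z ⬝ᵥ ((1 + lap W)⁻¹ *ᵥ
          (vecMulVec (vij i j) (vij i j) *ᵥ ctr z))) :=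
  stmt_3_general wbar W hsymm hW s i j z hz
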